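/- Let G be a finite solvable group whose Frattini subgroup Φ has nilpotency class c, with k(Φ) ≥ (c/2)|Φ|^(1/c) and k(G/Φ) ≥ |G/Φ|^β for a constant 0 < β ≤ 1. Then k(G) > ((1/2)·c·|G|^(1/c))^(β/3). -/

import Mathlib

/-! Write `q = |G : Φ|` and `L = k(G)`. Counting classes gives `k(Φ) ≤ L q` and `k(G/Φ) ≤ L`,
so `q ^ β ≤ L`. As `Φ` is a proper subgroup, `q > 1`, and the hypothesis on `k(Φ)` yields
`(c/2) |G|^(1/c) < k(Φ) q`: for `c = 1` because `Φ` is abelian, so `k(Φ) = |Φ|`, and for `c ≥ 2`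
because `q^(1/c) < q`. Hence `((c/2) |G|^(1/c))^β < (L q²)^β ≤ L^β (q^β)² ≤ L³`. -/

instance frattiniNilpotent (G : Type*) [Group G] [Finite G] :
    Group.IsNilpotent (frattini G) := frattini_nilpotent

open Real

theorem Subgroup.card_conjClasses_le_mul_index {G : Type*} [Group G] [Finite G] (H : Subgroup G) :
    Nat.card (ConjClasses H) ≤ Nat.card (ConjClasses G) * H.index := by
  have hH : (0 : ℚ) < Nat.card H := Nat.cast_pos.mpr Finite.card_pos
  have h := H.commProb_subgroup_le
  rw [commProb_def', commProb_def', ← H.card_mul_index, div_le_iff₀ hH, Nat.cast_mul] at h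
  have : (Nat.card (ConjClasses H) : ℚ) ≤ Nat.card (ConjClasses G) * H.index :=
    h.trans_eq (by field_simp)
  exact_mod_cast this

theorem card_conjClasses_quotient_le {G : Type*} [Group G] [Finite G] (N : Subgroup G) [N.Normal] :
    Nat.card (ConjClasses (G ⧸ N)) ≤ Nat.card (ConjClasses G) :=
  Nat.card_le_card_of_surjective _ (ConjClasses.map_surjective (QuotientGroup.mk'_surjective N))

theorem card_conjClasses_of_isMulCommutative {G : Type*} [Group G] [IsMulCommutative G] :
    Nat.card (ConjClasses G) = Nat.card G := by
  let _ : CommGroup G := { ‹Group G› with mul_comm := mul_comm' }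
  exact (Nat.card_congr ConjClasses.mkEquiv).symm

theorem frattini_ne_top {G : Type*} [Group G] [Finite G] [Nontrivial G] : frattini G ≠ ⊤ := by
  intro h
  exact bot_ne_top (frattini_nongenerating (K := ⊥) (by rw [h, sup_top_eq]))

theorem rpow_lt_pow_three {β X K q L : ℝ} (hβ0 : 0 < β) (hβ1 : β ≤ 1) (hX : 0 ≤ X)
    (hXK : X < K * q) (hKL : K ≤ L * q) (hq : 0 ≤ q) (hqL : q ^ β ≤ L) (hL : 1 ≤ L) :
    X ^ β < L ^ 3 :=
  calc X ^ β < (K * q) ^ β := rpow_lt_rpow hX hXK hβ0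
    _ ≤ (L * q ^ 2) ^ β := by
      refine rpow_le_rpow (hX.trans hXK.le) ?_ hβ0.le
      calc K * q ≤ L * q * q := mul_le_mul_of_nonneg_right hKL hq
        _ = L * q ^ 2 := by ring
    _ = L ^ β * (q ^ β) ^ 2 := by
      rw [mul_rpow (by linarith) (by positivity), rpow_pow_comm hq]
    _ ≤ L * L ^ 2 := by
      gcongr
      exact rpow_le_self_of_one_le hL hβ1
    _ = L ^ 3 := by ring

theorem rpow_div_three_lt_of_rpow_lt_pow_three {β X L : ℝ} (hX : 0 ≤ X) (hL : 0 ≤ L)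
    (h : X ^ β < L ^ 3) : X ^ (β / 3) < L := by
  refine lt_of_pow_lt_pow_left₀ 3 hL ?_
  rwa [← rpow_mul_natCast hX, Nat.cast_ofNat, div_mul_cancel₀ β three_ne_zero]

theorem Subgroup.half_mul_card_rpow_lt {G : Type*} [Group G] [Finite G] (H : Subgroup G)
    [Group.IsNilpotent H] (hH : H ≠ ⊤) (c : ℕ) (hc : Group.nilpotencyClass H = c) (hc1 : 1 ≤ c)
    (hk : (c / 2 : ℝ) * (Nat.card H : ℝ) ^ ((1 : ℝ) / c) ≤ Nat.card (ConjClasses H)) :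
    (1 / 2 : ℝ) * c * (Nat.card G : ℝ) ^ ((1 : ℝ) / c) <
      Nat.card (ConjClasses H) * H.index := by
  have hφ : (0 : ℝ) < Nat.card H := Nat.cast_pos.mpr Finite.card_pos
  have hq : (1 : ℝ) < H.index := Nat.one_lt_cast.mpr (H.one_lt_index_of_ne_top hH)
  rw [← H.card_mul_index, Nat.cast_mul, mul_rpow hφ.le (by linarith)]
  obtain rfl | hc2 := hc1.eq_or_lt
  · have : IsMulCommutative H := Group.IsNilpotent.nilpotencyClass_le_one_iff.mp hc.le
    rw [card_conjClasses_of_isMulCommutative]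
    simp only [Nat.cast_one, div_one, rpow_one]
    nlinarith
  · have hq' : (H.index : ℝ) ^ ((1 : ℝ) / c) < H.index := by
      refine rpow_lt_self_of_one_lt hq ?_
      rw [div_lt_one (by positivity)]
      exact_mod_cast hc2
    calc (1 / 2 : ℝ) * c * ((Nat.card H : ℝ) ^ ((1 : ℝ) / c) * (H.index : ℝ) ^ ((1 : ℝ) / c))
        = (c / 2 : ℝ) * (Nat.card H : ℝ) ^ ((1 : ℝ) / c) * (H.index : ℝ) ^ ((1 : ℝ) / c) := by
          ring
      _ ≤ Nat.card (ConjClasses H) * (H.index : ℝ) ^ ((1 : ℝ) / c) := by gcongr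
      _ < Nat.card (ConjClasses H) * H.index := by
          gcongr
          exact Nat.cast_pos.mpr Finite.card_pos

theorem stmt15_general (G : Type*) [Group G] [Finite G] (β : ℝ)
    (hβ0 : 0 < β) (hβ1 : β ≤ 1) (c : ℕ)
    (hc : c = Group.nilpotencyClass (frattini G)) (hc1 : 1 ≤ c)
    (hΦ : 2 ≤ Nat.card (frattini G))
    (hkΦ : (Nat.card (ConjClasses (frattini G)) : ℝ) ≥
      (c / 2 : ℝ) * (Nat.card (frattini G) : ℝ) ^ ((1 : ℝ) / c))
    (hQ : (Nat.card (ConjClasses (G ⧸ frattini G)) : ℝ) ≥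
      (Nat.card (G ⧸ frattini G) : ℝ) ^ β) :
    (Nat.card (ConjClasses G) : ℝ) >
      ((1 / 2 : ℝ) * c * (Nat.card G : ℝ) ^ ((1 : ℝ) / c)) ^ (β / 3) := by
  have : Nontrivial G :=
    Finite.one_lt_card_iff_nontrivial.mp
      ((one_lt_two.trans_le hΦ).trans_le (Subgroup.card_le_card_group _))
  have hlt := (frattini G).half_mul_card_rpow_lt frattini_ne_top c hc.symm hc1 hkΦ
  have hsub : (Nat.card (ConjClasses (frattini G)) : ℝ) ≤
      Nat.card (ConjClasses G) * (frattini G).index := by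
    exact_mod_cast (frattini G).card_conjClasses_le_mul_index
  have hquot : ((frattini G).index : ℝ) ^ β ≤ Nat.card (ConjClasses G) := by
    rw [Subgroup.index]
    exact hQ.trans (Nat.cast_le.mpr (card_conjClasses_quotient_le _))
  have hL : (1 : ℝ) ≤ Nat.card (ConjClasses G) := Nat.one_le_cast.mpr Finite.card_pos
  exact rpow_div_three_lt_of_rpow_lt_pow_three (by positivity) (by positivity)
    (rpow_lt_pow_three hβ0 hβ1 (by positivity) hlt hsub (Nat.cast_nonneg _) hquot hL)

theorem stmt15 (G : Type*) [Group G] [Finite G] [Group.IsSolvable G] (β : ℝ)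
    (hβ0 : 0 < β) (hβ1 : β ≤ 1) (c : ℕ)
    (hc : c = Group.nilpotencyClass (frattini G)) (hc1 : 1 ≤ c)
    (hΦ : 2 ≤ Nat.card (frattini G))
    (hkΦ : (Nat.card (ConjClasses (frattini G)) : ℝ) ≥
      (c / 2 : ℝ) * (Nat.card (frattini G) : ℝ) ^ ((1 : ℝ) / c))
    (hQ : (Nat.card (ConjClasses (G ⧸ frattini G)) : ℝ) ≥
      (Nat.card (G ⧸ frattini G) : ℝ) ^ β) :
    (Nat.card (ConjClasses G) : ℝ) >
      ((1 / 2 : ℝ) * c * (Nat.card G : ℝ) ^ ((1 : ℝ) / c)) ^ (β / 3) :=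
  stmt15_general G β hβ0 hβ1 c hc hc1 hΦ hkΦ hQ
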